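/- For every t ≥ 1 and n = 2^t, the fundamental coding gain of the Barnes–Wall lattice satisfies γ(BW_n) = d(BW_n)/vol(BW_n)^{2/n} = √(n/2); in particular γ(BW_{2n}) = √2·γ(BW_n). -/

import Mathlib

open Matrix

noncomputable section

/-- `Rmat n` is the `n × n` matrix `I_{n/2} ⊗ R(2)`, block diagonal with
`2 × 2` blocks `[[1, 1], [1, -1]]`, acting on row vectors on the right. -/
def Rmat (n : ℕ) : Matrix (Fin n) (Fin n) ℝ :=
  Matrix.of fun i j =>
    if (i : ℕ) / 2 = (j : ℕ) / 2 then
      if (i : ℕ) % 2 = 1 ∧ (j : ℕ) % 2 = 1 then -1 else 1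
    else 0

/-- Concatenation `(u, v)` of two `2^t`-dimensional vectors into a
`2^(t+1)`-dimensional vector. -/
def concat {t : ℕ} (u v : Fin (2 ^ t) → ℝ) : Fin (2 ^ (t + 1)) → ℝ := fun i =>
  if h : (i : ℕ) < 2 ^ t then u ⟨i, h⟩
  else v ⟨(i : ℕ) - 2 ^ t, by
    have hi := i.isLt
    have h2 : 2 ^ (t + 1) = 2 ^ t + 2 ^ t := by rw [pow_succ]; ring
    omega⟩

/-- The Barnes–Wall lattices `BW_{2^t} ⊆ ℝ^{2^t}`, defined recursively by
`BW_2 = ℤ²` and `BW_{2n} = {(u, u + v) : u ∈ BW_n, v ∈ BW_n · R(n)}`. -/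
def BW : ∀ t : ℕ, Set (Fin (2 ^ t) → ℝ)
  | 0 => {x | ∀ i, ∃ z : ℤ, x i = (z : ℝ)}
  | (t + 1) =>
    {x | ∃ u v : Fin (2 ^ t) → ℝ, u ∈ BW t ∧
      (∃ w ∈ BW t, v = Matrix.vecMul w (Rmat (2 ^ t))) ∧ x = concat u (u + v)}

/-- `RBW_n = {x · R(n) : x ∈ BW_n}`. -/
def RBW (t : ℕ) : Set (Fin (2 ^ t) → ℝ) :=
  (fun x => Matrix.vecMul x (Rmat (2 ^ t))) '' BW t

/-- Squared Euclidean norm. -/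
def sqnorm {m : ℕ} (x : Fin m → ℝ) : ℝ := ∑ i, x i ^ 2

/-- `minDist Λ` is the minimum of `‖x‖²` over nonzero `x ∈ Λ`. -/
def minDist {m : ℕ} (Λ : Set (Fin m → ℝ)) : ℝ :=
  sInf (sqnorm '' {x ∈ Λ | x ≠ 0})

/-- `B` is (the matrix of) a `ℤ`-basis of `Λ`: `B` is invertible and `Λ` is the set
of integer combinations of the rows of `B`. The covolume of `Λ` is then `|det B|`. -/
def IsZBasis {m : ℕ} (B : Matrix (Fin m) (Fin m) ℝ) (Λ : Set (Fin m → ℝ)) : Prop :=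
  B.det ≠ 0 ∧
    Λ = {x | ∃ z : Fin m → ℤ, x = Matrix.vecMul (fun i => (z i : ℝ)) B}

/-- The fundamental coding gain `γ(Λ) = d(Λ)/vol(Λ)^{2/m}`, computed from a
`ℤ`-basis matrix `B` of `Λ` (so `vol(Λ) = |det B|`). -/
def codingGain {m : ℕ} (Λ : Set (Fin m → ℝ)) (B : Matrix (Fin m) (Fin m) ℝ) : ℝ :=
  minDist Λ / |B.det| ^ ((2 : ℝ) / (m : ℝ))

/-!
`BW_{2n}` is the `|u|u+v|` construction applied to `BW_n ⊇ RBW_n`, and for even `n` the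
matrix `R = R(n)` satisfies `R Rᵀ = R² = 2`. Hence `‖vR‖² = 2‖v‖²`, `RBW_n ⊆ BW_n`, and a
nonzero `(u, u + v)` has squared norm at least `min (2 d(BW_n)) d(RBW_n) = 2 d(BW_n)`, attained
by `(x, x)` for a minimal `x`; starting from `BW_2 = ℤ²` this gives `d(BW_n) = n/2`. The block
matrix `[[B, B], [0, BR]]` is a `ℤ`-basis of `BW_{2n}` whenever `B` is one of `BW_n`, so
`vol(BW_{2n})² = vol(BW_n)⁴ · 2ⁿ`, i.e. `vol(BW_n)^{2/n} = √(n/2)`. The covolume does not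
depend on the basis because two bases differ by a unimodular integer matrix.
-/

open Kronecker

lemma sqnorm_eq_dotProduct {m : ℕ} (x : Fin m → ℝ) : sqnorm x = x ⬝ᵥ x := by
  simp only [sqnorm, dotProduct, sq]

lemma sqnorm_vecMul_of_mul_transpose {m : ℕ} {M : Matrix (Fin m) (Fin m) ℝ} {c : ℝ}
    (hM : M * Mᵀ = c • 1) (w : Fin m → ℝ) : sqnorm (w ᵥ* M) = c * sqnorm w := by
  rw [sqnorm_eq_dotProduct, sqnorm_eq_dotProduct, ← dotProduct_mulVec, ← mulVec_transpose,
    mulVec_mulVec, hM, smul_mulVec, one_mulVec, dotProduct_smul, smul_eq_mul]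

lemma one_le_sqnorm_of_forall_int {m : ℕ} {x : Fin m → ℝ} (hx : ∀ i, ∃ z : ℤ, x i = z)
    (h0 : x ≠ 0) : 1 ≤ sqnorm x := by
  obtain ⟨i, hi⟩ := Function.ne_iff.mp h0
  obtain ⟨z, hz⟩ := hx i
  have hz0 : z ≠ 0 := by rintro rfl; simp_all
  calc (1 : ℝ) ≤ x i ^ 2 := by
        rw [hz]; exact mod_cast (one_le_sq_iff_one_le_abs _).mpr (Int.one_le_abs hz0)
    _ ≤ sqnorm x := Finset.single_le_sum (fun j _ => sq_nonneg (x j)) (Finset.mem_univ i)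

lemma min_le_sqnorm_add_sqnorm_add {m : ℕ} {u v : Fin m → ℝ} {dA dB : ℝ}
    (hu : u ≠ 0 → dA ≤ sqnorm u) (huv : u + v ≠ 0 → dA ≤ sqnorm (u + v))
    (hv : v ≠ 0 → dB ≤ sqnorm v) (hne : u ≠ 0 ∨ v ≠ 0) :
    min (2 * dA) dB ≤ sqnorm u + sqnorm (u + v) := by
  have sqnorm_zero : sqnorm (0 : Fin m → ℝ) = 0 := by simp [sqnorm]
  by_cases hu0 : u = 0
  · subst hu0
    simpa [sqnorm_zero] using min_le_of_right_le (hv (hne.resolve_left fun h => h rfl))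
  by_cases huv0 : u + v = 0
  · obtain rfl : v = -u := eq_neg_of_add_eq_zero_right huv0
    have : sqnorm (-u) = sqnorm u := by simp [sqnorm]
    rw [huv0, sqnorm_zero, add_zero, ← this]
    exact min_le_of_right_le (hv (neg_ne_zero.mpr hu0))
  · linarith [min_le_left (2 * dA) dB, hu hu0, huv huv0]

section IsZBasis

variable {m : ℕ} {B B' : Matrix (Fin m) (Fin m) ℝ} {Λ : Set (Fin m → ℝ)}

lemma IsZBasis.zero_mem (h : IsZBasis B Λ) : 0 ∈ Λ := by
  rw [h.2]
  exact ⟨0, by ext; simp [vecMul]⟩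

lemma IsZBasis.add_mem (h : IsZBasis B Λ) {x y : Fin m → ℝ} (hx : x ∈ Λ) (hy : y ∈ Λ) :
    x + y ∈ Λ := by
  rw [h.2] at hx hy ⊢
  obtain ⟨a, rfl⟩ := hx
  obtain ⟨b, rfl⟩ := hy
  exact ⟨a + b, by rw [← add_vecMul]; congr 1; ext; simp⟩

lemma IsZBasis.exists_intMatrix_mul_eq (h : IsZBasis B Λ) (h' : IsZBasis B' Λ) :
    ∃ Z : Matrix (Fin m) (Fin m) ℤ, Z.map (↑) * B' = B := by
  have hrow (i : Fin m) : B i ∈ Λ := by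
    rw [h.2]
    exact ⟨Pi.single i 1, by ext j; simp [vecMul, dotProduct, Pi.single_apply]⟩
  choose z hz using fun i => (by simpa [h'.2] using hrow i :
    ∃ z : Fin m → ℤ, B i = (fun k => (z k : ℝ)) ᵥ* B')
  exact ⟨of z, funext fun i => by rw [mul_apply_eq_vecMul, hz i]; rfl⟩

lemma IsZBasis.abs_det_eq (h : IsZBasis B Λ) (h' : IsZBasis B' Λ) : |B.det| = |B'.det| := by
  obtain ⟨Z, hZ⟩ := h.exists_intMatrix_mul_eq h'
  obtain ⟨Z', hZ'⟩ := h'.exists_intMatrix_mul_eq h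
  have hunit : Z.det * Z'.det = 1 := by
    have : ((Z.det * Z'.det : ℤ) : ℝ) * B.det = 1 * B.det := by
      conv_rhs => rw [← hZ, ← hZ']
      simp only [det_mul, Int.cast_mul, Int.cast_det]
      ring
    exact_mod_cast mul_right_cancel₀ h.1 this
  rw [← hZ, det_mul, abs_mul, ← Int.cast_det, ← Int.cast_abs,
    Int.isUnit_iff_abs_eq.mp (IsUnit.of_mul_eq_one _ hunit), Int.cast_one, one_mul]

end IsZBasis

def finTwoPowSuccEquiv (t : ℕ) : Fin (2 ^ (t + 1)) ≃ Fin (2 ^ t) ⊕ Fin (2 ^ t) :=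
  (finCongr (Nat.two_pow_succ t)).trans finSumFinEquiv.symm

@[simp]
lemma finTwoPowSuccEquiv_symm_inl_val {t : ℕ} (i : Fin (2 ^ t)) :
    ((finTwoPowSuccEquiv t).symm (Sum.inl i) : ℕ) = i := rfl

@[simp]
lemma finTwoPowSuccEquiv_symm_inr_val {t : ℕ} (i : Fin (2 ^ t)) :
    ((finTwoPowSuccEquiv t).symm (Sum.inr i) : ℕ) = 2 ^ t + i := rfl

lemma concat_eq_sumElim_comp {t : ℕ} (u v : Fin (2 ^ t) → ℝ) :
    concat u v = Sum.elim u v ∘ finTwoPowSuccEquiv t := by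
  rw [← Equiv.comp_symm_eq]
  ext (i | i) <;> simp [concat]

lemma sqnorm_concat {t : ℕ} (u v : Fin (2 ^ t) → ℝ) :
    sqnorm (concat u v) = sqnorm u + sqnorm v := by
  simp only [sqnorm, concat_eq_sumElim_comp, Function.comp_apply,
    Equiv.sum_comp (finTwoPowSuccEquiv t) fun s => Sum.elim u v s ^ 2, Fintype.sum_sum_type,
    Sum.elim_inl, Sum.elim_inr]

lemma concat_eq_zero_iff {t : ℕ} {u v : Fin (2 ^ t) → ℝ} :
    concat u v = 0 ↔ u = 0 ∧ v = 0 := by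
  rw [concat_eq_sumElim_comp,
    ← (finTwoPowSuccEquiv t).symm.surjective.injective_comp_right.eq_iff]
  simp [Function.comp_assoc, ← Sum.elim_zero_zero, Sum.elim_eq_iff]

lemma concat_vecMul_reindex_fromBlocks {t : ℕ} (a b : Fin (2 ^ t) → ℝ)
    (A B C D : Matrix (Fin (2 ^ t)) (Fin (2 ^ t)) ℝ) :
    concat a b ᵥ* reindex (finTwoPowSuccEquiv t).symm (finTwoPowSuccEquiv t).symm
      (fromBlocks A B C D) = concat (a ᵥ* A + b ᵥ* C) (a ᵥ* B + b ᵥ* D) := by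
  rw [concat_eq_sumElim_comp, reindex_apply, Equiv.symm_symm, submatrix_vecMul_equiv,
    Function.comp_assoc, Equiv.self_comp_symm, Function.comp_id, vecMul_fromBlocks,
    concat_eq_sumElim_comp]
  rfl

lemma Rmat_one : Rmat 1 = 1 := by
  ext i j
  obtain rfl : i = j := Fin.ext (by have := i.isLt; have := j.isLt; simp at *)
  simp [Rmat]

lemma Rmat_transpose (n : ℕ) : (Rmat n)ᵀ = Rmat n := by
  ext i j
  simp only [Rmat, transpose_apply, of_apply, eq_comm (a := (i : ℕ) / 2), and_comm]

lemma Rmat_mul_two_eq_kronecker (m : ℕ) : Rmat (m * 2) =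
    (1 ⊗ₖ !![1, 1; 1, -1] : Matrix (Fin m × Fin 2) (Fin m × Fin 2) ℝ).submatrix
      finProdFinEquiv.symm finProdFinEquiv.symm := by
  ext i j
  have hi : i.modNat = ⟨i % 2, Nat.mod_lt _ two_pos⟩ := rfl
  have hj : j.modNat = ⟨j % 2, Nat.mod_lt _ two_pos⟩ := rfl
  obtain h | h := Nat.mod_two_eq_zero_or_one i <;>
    obtain h' | h' := Nat.mod_two_eq_zero_or_one j <;> by_cases hd : (i : ℕ) / 2 = j / 2 <;>
    simp [Rmat, one_apply, Fin.ext_iff, hi, hj, h, h', hd]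

lemma Rmat_mul_self {n : ℕ} (hn : Even n) : Rmat n * Rmat n = (2 : ℝ) • 1 := by
  obtain ⟨m, rfl⟩ : ∃ m, n = m * 2 := ⟨n / 2, by rw [Nat.div_mul_cancel hn.two_dvd]⟩
  have hH : !![(1 : ℝ), 1; 1, -1] * !![1, 1; 1, -1] = (2 : ℝ) • 1 := by
    ext i j; fin_cases i <;> fin_cases j <;> norm_num
  rw [Rmat_mul_two_eq_kronecker, submatrix_mul_equiv, ← mul_kronecker_mul, one_mul, hH,
    kronecker_smul, one_kronecker_one]
  exact congrArg (fun M : Matrix (Fin (m * 2)) (Fin (m * 2)) ℝ => (2 : ℝ) • M)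
    (submatrix_one_equiv _)

lemma sqnorm_vecMul_Rmat {n : ℕ} (hn : Even n) (w : Fin n → ℝ) :
    sqnorm (w ᵥ* Rmat n) = 2 * sqnorm w :=
  sqnorm_vecMul_of_mul_transpose (by rw [Rmat_transpose, Rmat_mul_self hn]) w

lemma vecMul_Rmat_vecMul_Rmat {n : ℕ} (hn : Even n) (w : Fin n → ℝ) :
    w ᵥ* Rmat n ᵥ* Rmat n = (2 : ℝ) • w := by
  rw [vecMul_vecMul, Rmat_mul_self hn, vecMul_smul, vecMul_one]

lemma Rmat_det_sq {n : ℕ} (hn : Even n) : (Rmat n).det ^ 2 = 2 ^ n := by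
  simpa [sq] using congrArg det (Rmat_mul_self hn)

lemma Rmat_two_pow_succ {t : ℕ} (ht : t ≠ 0) :
    Rmat (2 ^ (t + 1)) = reindex (finTwoPowSuccEquiv t).symm (finTwoPowSuccEquiv t).symm
      (fromBlocks (Rmat (2 ^ t)) 0 0 (Rmat (2 ^ t))) := by
  obtain ⟨m, hm⟩ : 2 ∣ 2 ^ t := dvd_pow_self 2 ht
  rw [← Equiv.symm_apply_eq, reindex_symm, Equiv.symm_symm, reindex_apply]
  ext (i | i) (j | j)
  · rfl
  · have := i.isLt
    simp only [submatrix_apply, fromBlocks_apply₁₂, Matrix.zero_apply, Rmat, of_apply,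
      finTwoPowSuccEquiv_symm_inl_val, finTwoPowSuccEquiv_symm_inr_val]
    exact if_neg (by omega)
  · have := j.isLt
    simp only [submatrix_apply, fromBlocks_apply₂₁, Matrix.zero_apply, Rmat, of_apply,
      finTwoPowSuccEquiv_symm_inl_val, finTwoPowSuccEquiv_symm_inr_val]
    exact if_neg (by omega)
  · simp [Rmat, hm, Nat.mul_add_div]

lemma concat_vecMul_Rmat {t : ℕ} (ht : t ≠ 0) (a b : Fin (2 ^ t) → ℝ) :
    concat a b ᵥ* Rmat (2 ^ (t + 1)) = concat (a ᵥ* Rmat (2 ^ t)) (b ᵥ* Rmat (2 ^ t)) := by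
  rw [Rmat_two_pow_succ ht, concat_vecMul_reindex_fromBlocks]
  simp

lemma BW_one : BW 1 = {x | ∀ i, ∃ z : ℤ, x i = (z : ℝ)} := by
  ext x
  constructor
  · rintro ⟨u, _, hu, ⟨w, hw, rfl⟩, rfl⟩ i
    obtain ⟨a, ha⟩ := hu 0
    obtain ⟨b, hb⟩ := hw 0
    fin_cases i
    · exact ⟨a, by simpa [concat] using ha⟩
    · exact ⟨a + b, by simp [concat, Rmat_one, ha, hb]⟩
  · intro hx
    obtain ⟨a, ha⟩ := hx 0
    obtain ⟨b, hb⟩ := hx 1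
    refine ⟨fun _ => a, fun _ => b - a, fun _ => ⟨a, rfl⟩,
      ⟨fun _ => b - a, fun _ => ⟨b - a, by push_cast; rfl⟩, by simp [Rmat_one]⟩, ?_⟩
    ext i
    fin_cases i <;> simp [concat, ha, hb]

def Bmat : ∀ t, Matrix (Fin (2 ^ t)) (Fin (2 ^ t)) ℝ
  | 0 => 1
  | t + 1 => reindex (finTwoPowSuccEquiv t).symm (finTwoPowSuccEquiv t).symm
      (fromBlocks (Bmat t) (Bmat t) 0 (Bmat t * Rmat (2 ^ t)))

lemma Bmat_succ_det_sq (t : ℕ) : (Bmat (t + 1)).det ^ 2 = 2 ^ (t * 2 ^ t) := by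
  have hdet (t : ℕ) : (Bmat (t + 1)).det = (Bmat t).det ^ 2 * (Rmat (2 ^ t)).det := by
    rw [Bmat, det_reindex_self, det_fromBlocks_zero₂₁, det_mul]; ring
  induction t with
  | zero => simp [Bmat, Rmat_one]
  | succ t ih =>
    have hR : (Rmat (2 ^ (t + 1))).det ^ 2 = 2 ^ 2 ^ (t + 1) :=
      Rmat_det_sq (even_two.pow_of_ne_zero t.succ_ne_zero)
    rw [hdet, mul_pow, ih, hR, ← pow_mul, ← pow_add]
    congr 1
    ring

lemma Bmat_det_ne_zero : ∀ t, (Bmat t).det ≠ 0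
  | 0 => by simp [Bmat]
  | t + 1 => (pow_ne_zero_iff two_ne_zero).mp (by rw [Bmat_succ_det_sq]; positivity)

lemma intCast_vecMul_Bmat_succ {t : ℕ} (a b : Fin (2 ^ t) → ℤ) :
    (fun i => ((Sum.elim a b ∘ finTwoPowSuccEquiv t) i : ℝ)) ᵥ* Bmat (t + 1) =
      concat ((fun i => (a i : ℝ)) ᵥ* Bmat t)
        ((fun i => (a i : ℝ)) ᵥ* Bmat t + (fun i => (b i : ℝ)) ᵥ* Bmat t ᵥ* Rmat (2 ^ t)) := by
  have : (fun i => ((Sum.elim a b ∘ finTwoPowSuccEquiv t) i : ℝ)) =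
      concat (fun i => (a i : ℝ)) (fun i => (b i : ℝ)) := by
    rw [concat_eq_sumElim_comp]
    exact congrArg (· ∘ finTwoPowSuccEquiv t) (Sum.comp_elim Int.cast a b)
  rw [this, Bmat, concat_vecMul_reindex_fromBlocks, vecMul_zero, add_zero, vecMul_vecMul]

lemma BW_eq_intSpan_Bmat : ∀ t,
    BW t = {x | ∃ z : Fin (2 ^ t) → ℤ, x = (fun i => (z i : ℝ)) ᵥ* Bmat t}
  | 0 => by
    ext x
    simp only [BW, Bmat, vecMul_one, Set.mem_ofPred_eq, funext_iff]
    exact ⟨fun hx => ⟨fun i => (hx i).choose, fun i => (hx i).choose_spec⟩,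
      fun ⟨z, hz⟩ i => ⟨z i, hz i⟩⟩
  | t + 1 => by
    have ih := BW_eq_intSpan_Bmat t
    ext x
    constructor
    · rintro ⟨u, _, hu, ⟨w, hw, rfl⟩, rfl⟩
      rw [ih] at hu hw
      obtain ⟨a, rfl⟩ := hu
      obtain ⟨b, rfl⟩ := hw
      exact ⟨Sum.elim a b ∘ finTwoPowSuccEquiv t, (intCast_vecMul_Bmat_succ a b).symm⟩
    · rintro ⟨z, rfl⟩
      obtain ⟨a, b, rfl⟩ : ∃ a b : Fin (2 ^ t) → ℤ, z = Sum.elim a b ∘ finTwoPowSuccEquiv t :=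
        ⟨_, _, (Equiv.comp_symm_eq _ _ _).mp (Sum.elim_comp_inl_inr _).symm⟩
      rw [intCast_vecMul_Bmat_succ]
      exact ⟨_, _, by rw [ih]; exact ⟨a, rfl⟩, ⟨_, by rw [ih]; exact ⟨b, rfl⟩, rfl⟩, rfl⟩

lemma isZBasis_Bmat (t : ℕ) : IsZBasis (Bmat t) (BW t) :=
  ⟨Bmat_det_ne_zero t, BW_eq_intSpan_Bmat t⟩

lemma vecMul_Rmat_mem_BW : ∀ t, ∀ x ∈ BW t, x ᵥ* Rmat (2 ^ t) ∈ BW t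
  | 0, x, hx => by simpa [Rmat_one] using hx
  | 1, x, hx => by
    -- `R(2)` is not block diagonal in copies of `R(1) = 1`, so `BW_2 = ℤ²` is checked directly
    rw [BW_one] at hx ⊢
    obtain ⟨a, ha⟩ := hx 0
    obtain ⟨b, hb⟩ := hx 1
    intro j
    fin_cases j
    · exact ⟨a + b, by simp [vecMul, dotProduct, Fin.sum_univ_two, Rmat, ha, hb]⟩
    · exact ⟨a - b, by simp [vecMul, dotProduct, Fin.sum_univ_two, Rmat, ha, hb]; ring⟩
  | t + 2, x, ⟨u, _, hu, ⟨w, hw, hv⟩, hx⟩ => by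
    have hR : Even (2 ^ (t + 1)) := even_two.pow_of_ne_zero t.succ_ne_zero
    rw [hx, hv, concat_vecMul_Rmat t.succ_ne_zero, add_vecMul, vecMul_Rmat_vecMul_Rmat hR]
    refine ⟨_, _, vecMul_Rmat_mem_BW (t + 1) u hu, ⟨w ᵥ* Rmat (2 ^ (t + 1)),
      vecMul_Rmat_mem_BW (t + 1) w hw, (vecMul_Rmat_vecMul_Rmat hR w).symm⟩, rfl⟩

lemma two_pow_le_sqnorm_of_mem_BW : ∀ t, ∀ x ∈ BW (t + 1), x ≠ 0 → (2 : ℝ) ^ t ≤ sqnorm x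
  | 0, x, hx, h0 => by
    rw [BW_one] at hx
    simpa using one_le_sqnorm_of_forall_int hx h0
  | t + 1, x, ⟨u, v, hu, ⟨w, hw, hv⟩, hx⟩, h0 => by
    have hR : Even (2 ^ (t + 1)) := even_two.pow_of_ne_zero t.succ_ne_zero
    have hZ := isZBasis_Bmat (t + 1)
    have ih := two_pow_le_sqnorm_of_mem_BW t
    subst hx
    have hne : u ≠ 0 ∨ v ≠ 0 := by
      by_contra! h
      exact h0 (concat_eq_zero_iff.mpr ⟨h.1, by rw [h.1, h.2, add_zero]⟩)
    have hvB : v ≠ 0 → (2 : ℝ) ^ (t + 1) ≤ sqnorm v := fun hv0 => by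
      have hw0 : w ≠ 0 := by rintro rfl; simp [hv] at hv0
      rw [hv, sqnorm_vecMul_Rmat hR, pow_succ']
      exact mul_le_mul_of_nonneg_left (ih w hw hw0) zero_le_two
    have := min_le_sqnorm_add_sqnorm_add (ih u hu)
      (ih _ (hZ.add_mem hu (hv ▸ vecMul_Rmat_mem_BW _ w hw))) hvB hne
    rwa [← pow_succ', min_self, ← sqnorm_concat] at this

lemma exists_mem_BW_sqnorm_eq : ∀ t, ∃ x ∈ BW (t + 1), x ≠ 0 ∧ sqnorm x = (2 : ℝ) ^ t
  | 0 => by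
    refine ⟨Pi.single 0 1, ?_, by simp, by simp [sqnorm, Pi.single_apply]⟩
    rw [BW_one]
    intro i
    exact ⟨(Pi.single 0 1 : Fin 2 → ℤ) i, by simp [Pi.single_apply, apply_ite]⟩
  | t + 1 => by
    obtain ⟨x, hx, hx0, hxn⟩ := exists_mem_BW_sqnorm_eq t
    refine ⟨concat x x, ⟨x, 0, hx, ⟨0, (isZBasis_Bmat _).zero_mem, by simp⟩, by simp⟩,
      fun h => hx0 (concat_eq_zero_iff.mp h).1, ?_⟩
    rw [sqnorm_concat, hxn, pow_succ]
    ring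

lemma minDist_BW (t : ℕ) : minDist (BW (t + 1)) = 2 ^ t := by
  obtain ⟨x, hx, hx0, hxn⟩ := exists_mem_BW_sqnorm_eq t
  refine IsLeast.csInf_eq ⟨⟨x, ⟨hx, hx0⟩, hxn⟩, ?_⟩
  rintro _ ⟨y, ⟨hy, hy0⟩, rfl⟩
  exact two_pow_le_sqnorm_of_mem_BW t y hy hy0

lemma abs_det_rpow_of_isZBasis_BW {t : ℕ}
    {B : Matrix (Fin (2 ^ (t + 1))) (Fin (2 ^ (t + 1))) ℝ} (hB : IsZBasis B (BW (t + 1))) :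
    |B.det| ^ ((2 : ℝ) / ((2 ^ (t + 1) : ℕ) : ℝ)) = √(2 ^ t) := by
  have hsq : |B.det| ^ 2 = √(2 ^ t) ^ 2 ^ (t + 1) := by
    rw [hB.abs_det_eq (isZBasis_Bmat _), sq_abs, Bmat_succ_det_sq, pow_succ,
      pow_mul' √_, Real.sq_sqrt (by positivity), pow_mul]
  rw [div_eq_mul_inv, Real.rpow_mul (abs_nonneg _), Real.rpow_two, hsq,
    Real.pow_rpow_inv_natCast (Real.sqrt_nonneg _) (by positivity)]

lemma codingGain_BW {t : ℕ} {B : Matrix (Fin (2 ^ (t + 1))) (Fin (2 ^ (t + 1))) ℝ}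
    (hB : IsZBasis B (BW (t + 1))) : codingGain (BW (t + 1)) B = √(2 ^ t) := by
  rw [codingGain, minDist_BW, abs_det_rpow_of_isZBasis_BW hB, Real.div_sqrt]

/-- `γ(BW_n) = d(BW_n)/vol(BW_n)^{2/n} = √(n/2)`; in particular
`γ(BW_{2n}) = √2·γ(BW_n)`. -/
theorem bw_coding_gain :
    ∀ t : ℕ, 1 ≤ t →
      (∀ B : Matrix (Fin (2 ^ t)) (Fin (2 ^ t)) ℝ, IsZBasis B (BW t) →
        codingGain (BW t) B = Real.sqrt ((2 ^ t : ℝ) / 2)) ∧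
      (∀ B : Matrix (Fin (2 ^ t)) (Fin (2 ^ t)) ℝ,
       ∀ B' : Matrix (Fin (2 ^ (t + 1))) (Fin (2 ^ (t + 1))) ℝ,
        IsZBasis B (BW t) → IsZBasis B' (BW (t + 1)) →
        codingGain (BW (t + 1)) B' = Real.sqrt 2 * codingGain (BW t) B) := by
  intro t ht
  obtain ⟨t, rfl⟩ := Nat.exists_eq_add_of_le' ht
  refine ⟨fun B hB => ?_, fun B B' hB hB' => ?_⟩
  · rw [codingGain_BW hB, pow_succ, mul_div_cancel_right₀ _ two_ne_zero]
  · rw [codingGain_BW hB, codingGain_BW hB', ← Real.sqrt_mul zero_le_two, pow_succ']
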